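/- arXiv:2103.13427 — 3 statements merged into one kernel-verified Lean document; each statement's English description precedes it below -/
import Mathlib

section
/- For the max constraint loss CLoss = Σ_A CLoss_A where CLoss_A = -y_A · ln(max_{B ∈ D_A}(y_B · h_B)) - (1 - y_A) · ln(1 - max_{B ∈ D_A} h_B), with ground truth y ∈ {0,1} consistent with the hierarchy (y_B = 1 and B ∈ D_A implies y_A = 1): for each class A, if y_A = 1 then ∂CLoss/∂h_A ≤ 0, and if y_A = 0 then ∂CLoss/∂h_A ≥ 0. -/
open Real Set Topology Function Finset

/-! Along the coordinate `h_A` the loss is monotone. If `y_A = 1`, then `h_A` only enters the terms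
of classes `A'` with `A ∈ D_{A'}`, which have `y_{A'} = 1` by consistency, through the positive,
nondecreasing `max_B y_B h_B`, so each such term `-ln(max …)` is nonincreasing. If `y_A = 0`, then
`h_A` only enters through `max_B h_B < 1` inside `-ln(1 - ·)`, which is nondecreasing. A function
monotone on a neighbourhood of a point has derivative of the corresponding sign there. -/

section Derivative

variable {𝕜 : Type*} [NontriviallyNormedField 𝕜] [LinearOrder 𝕜] [IsStrictOrderedRing 𝕜]
  [OrderTopology 𝕜] {f : 𝕜 → 𝕜} {s : Set 𝕜} {x d : 𝕜}

lemma HasDerivAt.nonneg_of_monotoneOn_of_mem_nhds (hd : HasDerivAt f d x) (hs : s ∈ 𝓝 x)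
    (hf : MonotoneOn f s) : 0 ≤ d :=
  hd.hasDerivWithinAt.nonneg_of_monotoneOn
    (by simpa using (PerfectSpace.univ_preperfect x (mem_univ x)).nhds_inter hs) hf

lemma HasDerivAt.nonpos_of_antitoneOn_of_mem_nhds (hd : HasDerivAt f d x) (hs : s ∈ 𝓝 x)
    (hf : AntitoneOn f s) : d ≤ 0 :=
  hd.hasDerivWithinAt.nonpos_of_antitoneOn
    (by simpa using (PerfectSpace.univ_preperfect x (mem_univ x)).nhds_inter hs) hf

end Derivative

section SupUpdate

variable {ι α : Type*} [DecidableEq ι] [SemilatticeSup α] {s : Finset ι} (hs : s.Nonempty)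

lemma Finset.sup'_update_of_notMem {i : ι} (hi : i ∉ s) (f : ι → α) (a : α) :
    s.sup' hs (update f i a) = s.sup' hs f :=
  sup'_congr hs rfl fun _ hj => update_of_ne (ne_of_mem_of_not_mem hj hi) _ _

lemma Finset.monotone_sup'_update (f : ι → α) (i : ι) :
    Monotone fun a => s.sup' hs (update f i a) :=
  fun _ _ hab => sup'_mono_fun fun j _ => update_mono (f := f) (i := i) hab j

end SupUpdate

lemma Function.mul_update_eq_update_mul {ι R : Type*} [DecidableEq ι] [Mul R] (y g : ι → R)
    (i : ι) (t : R) :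
    (fun j => y j * update g i t j) = update (fun j => y j * g j) i (y i * t) := by
  ext j
  rcases eq_or_ne j i with rfl | hj <;> simp [*]

section MaxConstraintLoss

variable {C : Type*} [DecidableEq C] (D : C → Finset C) (hmem : ∀ A, A ∈ D A) (y : C → ℝ)

noncomputable def classLoss (g : C → ℝ) (A : C) : ℝ :=
  -(y A) * log ((D A).sup' ⟨A, hmem A⟩ fun B => y B * g B)
    - (1 - y A) * log (1 - (D A).sup' ⟨A, hmem A⟩ g)

noncomputable def maxConstraintLoss [Fintype C] (g : C → ℝ) : ℝ :=
  ∑ A, classLoss D hmem y g A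

variable {D hmem y} {g : C → ℝ} {A A' : C}

lemma classLoss_update_of_notMem (hA : A ∉ D A') (t : ℝ) :
    classLoss D hmem y (update g A t) A' = classLoss D hmem y g A' := by
  simp only [classLoss, mul_update_eq_update_mul, sup'_update_of_notMem ⟨A', hmem A'⟩ hA]

lemma antitoneOn_classLoss_update (hg : ∀ B, 0 < g B) (hyA : 0 ≤ y A) (hyA' : y A' = 1) :
    AntitoneOn (fun t => classLoss D hmem y (update g A t) A') (Ioi 0) := by
  intro s hs t _ hst
  have hpos : 0 < (D A').sup' ⟨A', hmem A'⟩ fun B => y B * update g A s B := by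
    refine lt_of_lt_of_le ?_ (le_sup' _ (hmem A'))
    rw [hyA', one_mul]
    exact (forall_update_iff g fun _ v => 0 < v).2 ⟨hs, fun B _ => hg B⟩ A'
  have hmono := monotone_sup'_update ⟨A', hmem A'⟩ (fun B => y B * g B) A
    (mul_le_mul_of_nonneg_left hst hyA)
  simp only [classLoss, hyA', sub_self, zero_mul, sub_zero, neg_mul, one_mul, neg_le_neg_iff,
    mul_update_eq_update_mul] at hpos ⊢
  exact log_le_log hpos hmono

lemma monotoneOn_classLoss_update (hg : ∀ B, g B < 1) (hyA : y A = 0) (hyA' : y A' ≤ 1) :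
    MonotoneOn (fun t => classLoss D hmem y (update g A t) A') (Iio 1) := by
  intro s _ t ht hst
  have hlt : (D A').sup' ⟨A', hmem A'⟩ (update g A t) < 1 :=
    (sup'_lt_iff _).2 fun B _ =>
      (forall_update_iff g fun _ v => v < 1).2 ⟨ht, fun B _ => hg B⟩ B
  have hmono := monotone_sup'_update ⟨A', hmem A'⟩ g A hst
  simp only [classLoss, mul_update_eq_update_mul, hyA, zero_mul, neg_mul]
  gcongr

variable [Fintype C]

lemma antitoneOn_maxConstraintLoss_update (hy : ∀ B, y B = 0 ∨ y B = 1)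
    (hcons : ∀ A B, B ∈ D A → y B = 1 → y A = 1) (hg : ∀ B, 0 < g B) (hyA : y A = 1) :
    AntitoneOn (fun t => maxConstraintLoss D hmem y (update g A t)) (Ioi 0) := by
  intro s hs t ht hst
  refine sum_le_sum fun A' _ => ?_
  rcases hy A' with hyA' | hyA'
  · have hA : A ∉ D A' := fun hA => by simpa [hyA'] using hcons A' A hA hyA
    rw [classLoss_update_of_notMem hA, classLoss_update_of_notMem hA]
  · exact antitoneOn_classLoss_update hg (by simp [hyA]) hyA' hs ht hst

lemma monotoneOn_maxConstraintLoss_update (hy : ∀ B, y B ≤ 1) (hg : ∀ B, g B < 1)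
    (hyA : y A = 0) :
    MonotoneOn (fun t => maxConstraintLoss D hmem y (update g A t)) (Iio 1) :=
  fun _ hs _ ht hst => sum_le_sum fun A' _ => monotoneOn_classLoss_update hg hyA (hy A') hs ht hst

end MaxConstraintLoss

/-- For the max constraint loss
`CLoss g = Σ_A (-y_A ln(max_{B ∈ D_A} y_B g_B) - (1-y_A) ln(1 - max_{B ∈ D_A} g_B))`,
with ground truth `y ∈ {0,1}` consistent with the hierarchy, at any point of
differentiability the partial derivative w.r.t. `h_A` is ≤ 0 if `y_A = 1`
and ≥ 0 if `y_A = 0`. -/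
theorem closs_gradient_sign
    {C : Type*} [Fintype C] [DecidableEq C]
    (D : C → Finset C) (hmem : ∀ A, A ∈ D A)
    (y : C → ℝ) (hy : ∀ A, y A = 0 ∨ y A = 1)
    (hcons : ∀ A B, B ∈ D A → y B = 1 → y A = 1)
    (h : C → ℝ) (hh : ∀ A, h A ∈ Set.Ioo (0 : ℝ) 1)
    (CLoss : (C → ℝ) → ℝ)
    (hCL : ∀ g : C → ℝ, CLoss g =
      ∑ A : C, (-(y A) * Real.log ((D A).sup' ⟨A, hmem A⟩ (fun B => y B * g B))
        - (1 - y A) * Real.log (1 - (D A).sup' ⟨A, hmem A⟩ g)))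
    (A : C) (d : ℝ)
    (hd : HasDerivAt (fun t => CLoss (Function.update h A t)) d (h A)) :
    (y A = 1 → d ≤ 0) ∧ (y A = 0 → 0 ≤ d) := by
  obtain rfl : CLoss = maxConstraintLoss D hmem y := funext hCL
  refine ⟨fun hyA => ?_, fun hyA => ?_⟩
  · exact hd.nonpos_of_antitoneOn_of_mem_nhds (Ioi_mem_nhds (hh A).1)
      (antitoneOn_maxConstraintLoss_update hy hcons (fun B => (hh B).1) hyA)
  · exact hd.nonneg_of_monotoneOn_of_mem_nhds (Iio_mem_nhds (hh A).2)
      (monotoneOn_maxConstraintLoss_update (fun B => (hy B).elim (·.le.trans zero_le_one) (·.le))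
        (fun B => (hh B).2) hyA)
end

section
/- Consider classes A, A₁, A₂ with constraints A₁ → A, A₂ → A, and A,¬A₁ → A₂, threshold θ = 1/2, negation v̄ = 1-v. Given h_A, h_{A₁}, h_{A₂} ∈ [0,1], define CM_{A₁} = h_{A₁}, CM_A = max(h_A, h_{A₁}, h_{A₂}), and CM_{A₂} = max(h_{A₂}, min(h_A, 1-h_{A₁}), min(h_{A₁}, 1-h_{A₁})). Then (i) CM_{A₁} ≤ CM_A, (ii) CM_{A₂} ≤ CM_A, and (iii) min(CM_A, 1-CM_{A₁}) ≤ CM_{A₂}; i.e., CM commits no constraint violations. -/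
/-!
Constraints (i) and (ii) hold because `CM_A` is a maximum over all the values that `CM_A₁` and
`CM_A₂` are built from. For (iii), distribute `min (·) (1 - h_{A₁})` over the maximum defining
`CM_A`: the three resulting terms are bounded by `h_{A₂}`, `min h_A (1 - h_{A₁})` and
`min h_{A₁} (1 - h_{A₁})` respectively, which are exactly the three terms of `CM_{A₂}`.
-/

section DistribLattice

variable {α : Type*} [DistribLattice α]

theorem sup_inf_sup_inf_le_sup_sup (a b c d e : α) :
    c ⊔ (a ⊓ d ⊔ b ⊓ e) ≤ a ⊔ (b ⊔ c) :=
  sup_le (le_sup_of_le_right le_sup_right)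
    (sup_le (inf_le_left.trans le_sup_left)
      (inf_le_left.trans (le_sup_of_le_right le_sup_left)))

theorem sup_sup_inf_le_sup_inf_sup_inf (a b c d : α) :
    (a ⊔ (b ⊔ c)) ⊓ d ≤ c ⊔ (a ⊓ d ⊔ b ⊓ d) := by
  rw [inf_sup_right, inf_sup_right]
  exact sup_le (le_sup_of_le_right le_sup_left)
    (sup_le (le_sup_of_le_right le_sup_right) (inf_le_left.trans le_sup_left))

end DistribLattice

theorem cm_basic_case_no_constraint_violation_general
    (hA hA1 hA2 CMA CMA1 CMA2 : ℝ)
    (e1 : CMA1 = hA1)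
    (e2 : CMA = max hA (max hA1 hA2))
    (e3 : CMA2 = max hA2 (max (min hA (1 - hA1)) (min hA1 (1 - hA1)))) :
    CMA1 ≤ CMA ∧ CMA2 ≤ CMA ∧ min CMA (1 - CMA1) ≤ CMA2 := by
  subst e1 e2 e3
  exact ⟨le_max_of_le_right (le_max_left _ _),
    sup_inf_sup_inf_le_sup_sup _ _ _ _ _,
    sup_sup_inf_le_sup_inf_sup_inf _ _ _ _⟩

/-- For classes `A, A₁, A₂` with constraints `A₁ → A`, `A₂ → A`
and `A, ¬A₁ → A₂`, the constraint module outputs commit no constraint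
violations. -/
theorem cm_basic_case_no_constraint_violation
    (hA hA1 hA2 CMA CMA1 CMA2 : ℝ)
    (hbA : hA ∈ Set.Icc (0:ℝ) 1) (hbA1 : hA1 ∈ Set.Icc (0:ℝ) 1)
    (hbA2 : hA2 ∈ Set.Icc (0:ℝ) 1)
    (e1 : CMA1 = hA1)
    (e2 : CMA = max hA (max hA1 hA2))
    (e3 : CMA2 = max hA2 (max (min hA (1 - hA1)) (min hA1 (1 - hA1)))) :
    CMA1 ≤ CMA ∧ CMA2 ≤ CMA ∧ min CMA (1 - CMA1) ≤ CMA2 :=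
  cm_basic_case_no_constraint_violation_general hA hA1 hA2 CMA CMA1 CMA2 e1 e2 e3
end

section
/- Let Π be a stratified finite set of normal rules with stratification Π₁,…,Π_s, and let H be a set of classes (facts). Define M₀ = H and M_{i+1} = the smallest superset of Mᵢ closed under the reduct of Π_{i+1} relative to Mᵢ. Then M_s is a stable model of Π ∪ { → A : A ∈ H }: M_s equals the smallest set closed under the reduct Π^{M_s} together with the facts H. -/
/-
The sets `M i` increase, and an element of `M j` that is not in `M k` is the head of
a rule of level above `k`. The stratification therefore pins every body atom of a rule `r` of
level `i + 1` down to an early stage: a positive one that enters some `M j` lies in `M (i + 1)`,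
a negative one already in `M i`. Hence `M i` decides the negative bodies of the rules of level
`i + 1` exactly as the final model does, so the stratum-wise closures build up
`Cl (Reduct Π (M s)) H` from below, while `M s` is closed under `Reduct Π (M s)`.
-/

/-- A normal rule `A₁,…,A_k, ¬A_{k+1},…,¬A_n → A`. -/
structure Rule (C : Type*) where
  pos : Finset C
  neg : Finset C
  head : C

/-- The reduct of `Π` relative to `M`: drop rules whose negative body meets
`M`, and keep the positive body and head of the remaining rules. -/
def Reduct {C : Type*} (Pi : Finset (Rule C)) (M : Set C) : Set (Finset C × C) :=
  {p | ∃ r ∈ Pi, (∀ A ∈ r.neg, A ∉ M) ∧ p = (r.pos, r.head)}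

/-- A set of classes is closed under a set of definite rules. -/
def ClosedDef {C : Type*} (R : Set (Finset C × C)) (S : Set C) : Prop :=
  ∀ p ∈ R, (↑p.1 : Set C) ⊆ S → p.2 ∈ S

/-- The smallest superset of `H` closed under the definite rules `R`. -/
def Cl {C : Type*} (R : Set (Finset C × C)) (H : Set C) : Set C :=
  ⋂₀ {S : Set C | H ⊆ S ∧ ClosedDef R S}

/-- A level assignment is a stratification. -/
def IsStratification {C : Type*} (Pi : Finset (Rule C)) (lvl : Rule C → ℕ) : Prop :=
  ∀ r ∈ Pi,
    (∀ B ∈ r.pos, ∀ r' ∈ Pi, r'.head = B → lvl r' ≤ lvl r) ∧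
    (∀ B ∈ r.neg, ∀ r' ∈ Pi, r'.head = B → lvl r' < lvl r)

section Closure

variable {C : Type*} {R R' : Set (Finset C × C)} {H S : Set C}

lemma subset_cl : H ⊆ Cl R H :=
  fun _ hx => Set.mem_sInter.mpr fun _ hS => hS.1 hx

lemma closedDef_cl : ClosedDef R (Cl R H) := by
  intro p hp hpos
  refine Set.mem_sInter.mpr fun S hS => hS.2 p hp ?_
  exact fun _ ha => Set.mem_sInter.mp (hpos ha) S hS

lemma cl_subset (hHS : H ⊆ S) (hS : ClosedDef R S) : Cl R H ⊆ S :=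
  fun _ hx => Set.mem_sInter.mp hx S ⟨hHS, hS⟩

lemma ClosedDef.mono (hS : ClosedDef R S) (hR : R' ⊆ R) : ClosedDef R' S :=
  fun p hp => hS p (hR hp)

lemma cl_subset_union_image_snd : Cl R H ⊆ H ∪ Prod.snd '' R :=
  cl_subset Set.subset_union_left fun p hp _ => Or.inr ⟨p, hp, rfl⟩

end Closure

def IsStratumIteration {C : Type*} (Pi : Finset (Rule C)) (lvl : Rule C → ℕ)
    (M : ℕ → Set C) : Prop :=
  ∀ i : ℕ, M (i + 1) = Cl (Reduct (Pi.filter (fun r => lvl r = i + 1)) (M i)) (M i)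

namespace IsStratumIteration

variable {C : Type*} {Pi : Finset (Rule C)} {lvl : Rule C → ℕ} {M : ℕ → Set C}

lemma monotone (hM : IsStratumIteration Pi lvl M) : Monotone M :=
  monotone_nat_of_le_succ fun i => (hM i).symm ▸ subset_cl

lemma exists_rule_head_eq_of_mem_of_notMem (hM : IsStratumIteration Pi lvl M) {A : C} {j k : ℕ}
    (hj : A ∈ M j) (hk : A ∉ M k) : ∃ r ∈ Pi, k < lvl r ∧ r.head = A := by
  induction j with
  | zero => exact absurd (hM.monotone (Nat.zero_le k) hj) hk
  | succ j ih =>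
    by_cases hjk : j + 1 ≤ k
    · exact absurd (hM.monotone hjk hj) hk
    rw [hM j] at hj
    rcases cl_subset_union_image_snd hj with hj | ⟨_, ⟨r, hr, -, rfl⟩, rfl⟩
    · exact ih hj
    · obtain ⟨hr, hlvl⟩ := Finset.mem_filter.mp hr
      exact ⟨r, hr, by omega, rfl⟩

lemma mem_lvl_of_mem_pos (hM : IsStratumIteration Pi lvl M) (hlvl : IsStratification Pi lvl)
    {r : Rule C} (hr : r ∈ Pi) {A : C} {j : ℕ} (hA : A ∈ r.pos) (hj : A ∈ M j) :
    A ∈ M (lvl r) := by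
  by_contra hk
  obtain ⟨r', hr', hlt, hhead⟩ := hM.exists_rule_head_eq_of_mem_of_notMem hj hk
  exact absurd ((hlvl r hr).1 A hA r' hr' hhead) (Nat.not_le.mpr hlt)

lemma mem_of_mem_neg (hM : IsStratumIteration Pi lvl M) (hlvl : IsStratification Pi lvl)
    {r : Rule C} (hr : r ∈ Pi) {i j : ℕ} (hi : lvl r = i + 1) {A : C} (hA : A ∈ r.neg)
    (hj : A ∈ M j) : A ∈ M i := by
  by_contra hk
  obtain ⟨r', hr', hlt, hhead⟩ := hM.exists_rule_head_eq_of_mem_of_notMem hj hk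
  have := (hlvl r hr).2 A hA r' hr' hhead
  omega

lemma reduct_stratum_subset (hM : IsStratumIteration Pi lvl M) (hlvl : IsStratification Pi lvl)
    (i t : ℕ) : Reduct (Pi.filter (fun r => lvl r = i + 1)) (M i) ⊆ Reduct Pi (M t) := by
  rintro _ ⟨r, hr, hneg, rfl⟩
  obtain ⟨hr, hi⟩ := Finset.mem_filter.mp hr
  exact ⟨r, hr, fun A hA ht => hneg A hA (hM.mem_of_mem_neg hlvl hr hi hA ht), rfl⟩

lemma subset_cl_reduct (hM : IsStratumIteration Pi lvl M) (hlvl : IsStratification Pi lvl)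
    (j t : ℕ) : M j ⊆ Cl (Reduct Pi (M t)) (M 0) := by
  induction j with
  | zero => exact subset_cl
  | succ j ih =>
    rw [hM j]
    exact cl_subset ih (closedDef_cl.mono (hM.reduct_stratum_subset hlvl j t))

lemma head_mem (hM : IsStratumIteration Pi lvl M) {r : Rule C} (hr : r ∈ Pi) {i : ℕ}
    (hi : lvl r = i + 1) (hneg : ∀ A ∈ r.neg, A ∉ M i) (hpos : ↑r.pos ⊆ M (i + 1)) :
    r.head ∈ M (i + 1) := by
  rw [hM i] at hpos ⊢
  exact closedDef_cl (r.pos, r.head) ⟨r, Finset.mem_filter.mpr ⟨hr, hi⟩, hneg, rfl⟩ hpos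

lemma closedDef_reduct (hM : IsStratumIteration Pi lvl M) (hlvl : IsStratification Pi lvl)
    {s : ℕ} (hrange : ∀ r ∈ Pi, 1 ≤ lvl r ∧ lvl r ≤ s) : ClosedDef (Reduct Pi (M s)) (M s) := by
  rintro _ ⟨r, hr, hneg, rfl⟩ hpos
  obtain ⟨hlo, hhi⟩ := hrange r hr
  obtain ⟨i, hi⟩ : ∃ i, lvl r = i + 1 := ⟨lvl r - 1, by omega⟩
  have hpos' : ↑r.pos ⊆ M (i + 1) := fun A hA => hi ▸ hM.mem_lvl_of_mem_pos hlvl hr hA (hpos hA)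
  have hneg' : ∀ A ∈ r.neg, A ∉ M i := fun A hA hAi => hneg A hA (hM.monotone (by omega) hAi)
  exact hM.monotone (by omega) (hM.head_mem hr hi hneg' hpos')

end IsStratumIteration

theorem stratified_iteration_is_stable_model_general
    {C : Type*}
    (Pi : Finset (Rule C)) (s : ℕ) (lvl : Rule C → ℕ)
    (hlvl : IsStratification Pi lvl)
    (hrange : ∀ r ∈ Pi, 1 ≤ lvl r ∧ lvl r ≤ s)
    (H : Set C)
    (M : ℕ → Set C)
    (hM0 : M 0 = H)
    (hMsucc : ∀ i : ℕ,
      M (i + 1) = Cl (Reduct (Pi.filter (fun r => lvl r = i + 1)) (M i)) (M i)) :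
    M s = Cl (Reduct Pi (M s)) H := by
  have hM : IsStratumIteration Pi lvl M := hMsucc
  subst hM0
  refine (hM.subset_cl_reduct hlvl s s).antisymm ?_
  exact cl_subset (hM.monotone (Nat.zero_le s)) (hM.closedDef_reduct hlvl hrange)

/-- Iterating the least closure of the reducts stratum by
stratum, starting from the facts `H`, yields a stable model of
`Π ∪ { → A : A ∈ H }`. -/
theorem stratified_iteration_is_stable_model
    {C : Type*} [DecidableEq (Rule C)]
    (Pi : Finset (Rule C)) (s : ℕ) (lvl : Rule C → ℕ)
    (hlvl : IsStratification Pi lvl)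
    (hrange : ∀ r ∈ Pi, 1 ≤ lvl r ∧ lvl r ≤ s)
    (H : Set C)
    (M : ℕ → Set C)
    (hM0 : M 0 = H)
    (hMsucc : ∀ i : ℕ,
      M (i + 1) = Cl (Reduct (Pi.filter (fun r => lvl r = i + 1)) (M i)) (M i)) :
    M s = Cl (Reduct Pi (M s)) H :=
  stratified_iteration_is_stable_model_general Pi s lvl hlvl hrange H M hM0 hMsucc
end
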